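/- arXiv:2004.07494 — 3 statements merged into one kernel-verified Lean document; each statement's English description precedes it below -/
import Mathlib

section
/- Let T1, T2, T3, T4 be bounded linear operators on H each admitting an A-adjoint (i.e. for each i there exists S_i with A∘S_i = T_i*∘A). Then w_B([[0,T2],[T3,0]]) ≤ w_B([[T1,T2],[T3,T4]]). -/
/-!
Write `A = Q† Q`, so that `‖x‖_A = ‖Q x‖`. If `A S = T† A`, then `R = S T` is symmetric for the
semi-inner product `⟪A ·, ·⟫`, and Cauchy–Schwarz gives `‖Q R u‖² ≤ ‖Q u‖ ‖Q R² u‖`; iterating along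
`R^(2^n)` and taking `2^n`-th roots yields `‖Q R u‖ ≤ ‖R‖ ‖Q u‖`, hence `‖Q T u‖² ≤ ‖S T‖ ‖Q u‖²`.
So every `Tᵢ` is `A`-bounded and the set defining `w_B` is bounded above. The off-diagonal form
is the half-difference of the forms of the full matrix at the `B`-unit vectors `(x, y)` and
`(x, -y)`.
-/

open scoped InnerProductSpace
open ContinuousLinearMap

variable {H : Type*} [NormedAddCommGroup H] [InnerProductSpace ℂ H] [CompleteSpace H]

/-- The `A`-seminorm `‖x‖_A = √⟨Ax,x⟩`. -/
noncomputable def aNorm (A : H →L[ℂ] H) (x : H) : ℝ :=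
  Real.sqrt (⟪A x, x⟫_ℂ).re

/-- The `A`-numerical radius `w_A(T) = sup {|⟨ATx,x⟩| : x ∈ H, ‖x‖_A = 1}`. -/
noncomputable def wA (A T : H →L[ℂ] H) : ℝ :=
  sSup {r : ℝ | ∃ x : H, aNorm A x = 1 ∧ r = ‖⟪A (T x), x⟫_ℂ‖}

/-- The `A`-operator seminorm `‖T‖_A = sup {‖Tx‖_A : x ∈ closure (range A), ‖x‖_A = 1}`. -/
noncomputable def aOpNorm (A T : H →L[ℂ] H) : ℝ :=
  sSup {r : ℝ | ∃ x : H, x ∈ closure (Set.range (⇑A)) ∧ aNorm A x = 1 ∧ r = aNorm A (T x)}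

/-- The `B`-numerical radius of the operator matrix `[[T1,T2],[T3,T4]]` acting on `H ⊕ H` by
`(x, y) ↦ (T1 x + T2 y, T3 x + T4 y)`, where `B = [[A,0],[0,A]]`:
`w_B(T) = sup {|⟨BTz,z⟩| : z ∈ H ⊕ H, ‖z‖_B = 1}`. -/
noncomputable def wB (A T1 T2 T3 T4 : H →L[ℂ] H) : ℝ :=
  sSup {r : ℝ | ∃ x y : H, Real.sqrt ((⟪A x, x⟫_ℂ).re + (⟪A y, y⟫_ℂ).re) = 1 ∧
    r = ‖⟪A (T1 x + T2 y), x⟫_ℂ + ⟪A (T3 x + T4 y), y⟫_ℂ‖}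

open scoped InnerProduct
open Filter Topology

theorem le_of_forall_mul_pow_le_mul_pow {a b c K : ℝ} {N : ℕ → ℕ} (hc : 0 < c) (hb : 0 ≤ b)
    (hN : Tendsto N atTop atTop) (h : ∀ n, c * a ^ N n ≤ K * b ^ N n) : a ≤ b := by
  by_contra! hba
  have ha : 0 < a := hb.trans_lt hba
  have hlim : Tendsto (fun n => K * (b / a) ^ N n) atTop (𝓝 0) := by
    simpa using ((tendsto_pow_atTop_nhds_zero_of_lt_one (div_nonneg hb ha.le)
      ((div_lt_one ha).2 hba)).comp hN).const_mul K
  have hc' : c ≤ 0 := ge_of_tendsto' hlim fun n => by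
    rw [div_pow, ← mul_div_assoc, le_div_iff₀ (pow_pos ha _)]
    exact h n
  linarith

section GramSeminorm

variable {𝕜 E F : Type*} [RCLike 𝕜] [NormedAddCommGroup E] [InnerProductSpace 𝕜 E]
  [CompleteSpace E] [NormedAddCommGroup F] [InnerProductSpace 𝕜 F] [CompleteSpace F]
  {Q : E →L[𝕜] F}

theorem norm_sq_apply_le_of_comp_eq_adjoint_comp {X Y : E →L[𝕜] E}
    (h : (Q† ∘L Q) ∘L X = Y† ∘L (Q† ∘L Q)) (u : E) :
    ‖Q (X u)‖ ^ 2 ≤ ‖Q u‖ * ‖Q (Y (X u))‖ := by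
  have key : ⟪(Q† ∘L Q) (X u), X u⟫_𝕜 = ⟪Q u, Q (Y (X u))⟫_𝕜 := by
    rw [← comp_apply, h, comp_apply, adjoint_inner_left, comp_apply, adjoint_inner_left]
  calc ‖Q (X u)‖ ^ 2 = RCLike.re ⟪Q u, Q (Y (X u))⟫_𝕜 := by
        rw [apply_norm_sq_eq_inner_adjoint_left, key]
    _ ≤ ‖⟪Q u, Q (Y (X u))⟫_𝕜‖ := RCLike.re_le_norm _
    _ ≤ ‖Q u‖ * ‖Q (Y (X u))‖ := norm_inner_le_norm _ _

theorem comp_pow_eq_adjoint_pow_comp {R : E →L[𝕜] E}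
    (hR : (Q† ∘L Q) ∘L R = R† ∘L (Q† ∘L Q)) (k : ℕ) :
    (Q† ∘L Q) ∘L R ^ k = (R ^ k)† ∘L (Q† ∘L Q) := by
  have := SemiconjBy.pow_right (a := Q† ∘L Q) (x := R) (y := star R) hR k
  rwa [← star_pow, star_eq_adjoint] at this

/- The extra factor `‖Q u‖` on the left replaces the exponent `2 ^ n - 1` on the right, which would
need truncated subtraction. -/
theorem mul_norm_pow_two_pow_le {R : E →L[𝕜] E}
    (hR : (Q† ∘L Q) ∘L R = R† ∘L (Q† ∘L Q)) (u : E) (n : ℕ) :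
    ‖Q u‖ * ‖Q (R u)‖ ^ 2 ^ n ≤ ‖Q u‖ ^ 2 ^ n * ‖Q ((R ^ 2 ^ n) u)‖ := by
  induction n with
  | zero => simp
  | succ n ih =>
    have hstep :=
      norm_sq_apply_le_of_comp_eq_adjoint_comp (comp_pow_eq_adjoint_pow_comp hR (2 ^ n)) u
    rw [← mul_apply_eq_comp, ← pow_add, ← two_mul, ← pow_succ'] at hstep
    rcases (norm_nonneg (Q u)).eq_or_lt with h0 | hpos
    · simp [← h0]
    refine le_of_mul_le_mul_left ?_ hpos
    calc ‖Q u‖ * (‖Q u‖ * ‖Q (R u)‖ ^ 2 ^ (n + 1))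
        = (‖Q u‖ * ‖Q (R u)‖ ^ 2 ^ n) ^ 2 := by ring
      _ ≤ (‖Q u‖ ^ 2 ^ n * ‖Q ((R ^ 2 ^ n) u)‖) ^ 2 := by gcongr
      _ = ‖Q u‖ ^ 2 ^ (n + 1) * ‖Q ((R ^ 2 ^ n) u)‖ ^ 2 := by ring
      _ ≤ ‖Q u‖ ^ 2 ^ (n + 1) * (‖Q u‖ * ‖Q ((R ^ 2 ^ (n + 1)) u)‖) := by gcongr
      _ = ‖Q u‖ * (‖Q u‖ ^ 2 ^ (n + 1) * ‖Q ((R ^ 2 ^ (n + 1)) u)‖) := by ring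

theorem norm_apply_le_of_comp_eq_adjoint_comp {R : E →L[𝕜] E}
    (hR : (Q† ∘L Q) ∘L R = R† ∘L (Q† ∘L Q)) (u : E) :
    ‖Q (R u)‖ ≤ ‖R‖ * ‖Q u‖ := by
  rcases (norm_nonneg (Q u)).eq_or_lt with h0 | hpos
  · have := norm_sq_apply_le_of_comp_eq_adjoint_comp hR u
    rw [← h0, zero_mul] at this
    rw [← h0, mul_zero]
    nlinarith [norm_nonneg (Q (R u))]
  refine le_of_forall_mul_pow_le_mul_pow (K := ‖Q‖ * ‖u‖) hpos (by positivity)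
    (tendsto_pow_atTop_atTop_of_one_lt one_lt_two) fun n => ?_
  have hpow : ‖Q ((R ^ 2 ^ n) u)‖ ≤ ‖Q‖ * (‖R‖ ^ 2 ^ n * ‖u‖) :=
    calc ‖Q ((R ^ 2 ^ n) u)‖ ≤ ‖Q‖ * (‖R ^ 2 ^ n‖ * ‖u‖) :=
          (Q.le_opNorm _).trans (by gcongr; exact (R ^ 2 ^ n).le_opNorm u)
      _ ≤ ‖Q‖ * (‖R‖ ^ 2 ^ n * ‖u‖) := by gcongr; exact norm_pow_le' R (by positivity)
  calc ‖Q u‖ * ‖Q (R u)‖ ^ 2 ^ n ≤ ‖Q u‖ ^ 2 ^ n * ‖Q ((R ^ 2 ^ n) u)‖ :=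
        mul_norm_pow_two_pow_le hR u n
    _ ≤ ‖Q u‖ ^ 2 ^ n * (‖Q‖ * (‖R‖ ^ 2 ^ n * ‖u‖)) := by gcongr
    _ = ‖Q‖ * ‖u‖ * (‖R‖ * ‖Q u‖) ^ 2 ^ n := by ring

theorem eventually_norm_apply_le_of_comp_eq_adjoint_comp {S T : E →L[𝕜] E}
    (hS : (Q† ∘L Q) ∘L S = T† ∘L (Q† ∘L Q)) :
    ∀ᶠ c in atTop, ∀ u, ‖Q (T u)‖ ≤ c * ‖Q u‖ := by
  have hT : (Q† ∘L Q) ∘L T = S† ∘L (Q† ∘L Q) := by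
    simpa only [adjoint_comp, adjoint_adjoint] using (congrArg adjoint hS).symm
  have hR : (Q† ∘L Q) ∘L (S ∘L T) = (S ∘L T)† ∘L (Q† ∘L Q) := by
    rw [adjoint_comp, ← comp_assoc, hS, comp_assoc, hT, comp_assoc]
  have hbound (u : E) : ‖Q (T u)‖ ≤ √‖S ∘L T‖ * ‖Q u‖ := by
    have hsq : ‖Q (T u)‖ ^ 2 ≤ ‖S ∘L T‖ * ‖Q u‖ ^ 2 :=
      calc ‖Q (T u)‖ ^ 2 ≤ ‖Q u‖ * ‖Q (S (T u))‖ := norm_sq_apply_le_of_comp_eq_adjoint_comp hT u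
        _ ≤ ‖Q u‖ * (‖S ∘L T‖ * ‖Q u‖) := by
          gcongr; exact norm_apply_le_of_comp_eq_adjoint_comp hR u
        _ = ‖S ∘L T‖ * ‖Q u‖ ^ 2 := by ring
    calc ‖Q (T u)‖ = √(‖Q (T u)‖ ^ 2) := (Real.sqrt_sq (norm_nonneg _)).symm
      _ ≤ √(‖S ∘L T‖ * ‖Q u‖ ^ 2) := Real.sqrt_le_sqrt hsq
      _ = √‖S ∘L T‖ * ‖Q u‖ := by rw [Real.sqrt_mul (norm_nonneg _), Real.sqrt_sq (norm_nonneg _)]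
  exact eventually_atTop.2 ⟨√‖S ∘L T‖, fun c hc u => (hbound u).trans (by gcongr)⟩

end GramSeminorm

/-- The quadratic form `⟪B T z, z⟫` at `z = (x, y)`, for `T = [[T1, T2], [T3, T4]]` and
`B = [[A, 0], [0, A]]`. -/
noncomputable def bForm (A T1 T2 T3 T4 : H →L[ℂ] H) (x y : H) : ℂ :=
  ⟪A (T1 x + T2 y), x⟫_ℂ + ⟪A (T3 x + T4 y), y⟫_ℂ

def wBSet (A T1 T2 T3 T4 : H →L[ℂ] H) : Set ℝ :=
  {r : ℝ | ∃ x y : H, Real.sqrt ((⟪A x, x⟫_ℂ).re + (⟪A y, y⟫_ℂ).re) = 1 ∧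
    r = ‖bForm A T1 T2 T3 T4 x y‖}

section BNumericalRadius

variable {E : Type*} [NormedAddCommGroup E] [InnerProductSpace ℂ E] {A T1 T2 T3 T4 : E →L[ℂ] E}

theorem wB_eq_sSup_wBSet : wB A T1 T2 T3 T4 = sSup (wBSet A T1 T2 T3 T4) := rfl

theorem wB_nonneg : 0 ≤ wB A T1 T2 T3 T4 :=
  Real.sSup_nonneg <| by rintro _ ⟨x, y, -, rfl⟩; exact norm_nonneg _

theorem bForm_zero_diag (x y : E) :
    bForm A 0 T2 T3 0 x y = (bForm A T1 T2 T3 T4 x y - bForm A T1 T2 T3 T4 x (-y)) / 2 := by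
  simp only [bForm, zero_apply, zero_add, add_zero, map_add, map_neg, inner_add_left,
    inner_neg_left, inner_neg_right]
  ring

theorem wB_zero_diag_le (hbdd : BddAbove (wBSet A T1 T2 T3 T4)) :
    wB A 0 T2 T3 0 ≤ wB A T1 T2 T3 T4 := by
  rw [wB_eq_sSup_wBSet, wB_eq_sSup_wBSet]
  refine Real.sSup_le ?_ wB_nonneg
  rintro _ ⟨x, y, hxy, rfl⟩
  have hxy' : Real.sqrt ((⟪A x, x⟫_ℂ).re + (⟪A (-y), -y⟫_ℂ).re) = 1 := by
    rwa [map_neg, inner_neg_neg]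
  have hpos := le_csSup hbdd ⟨x, y, hxy, rfl⟩
  have hneg := le_csSup hbdd ⟨x, -y, hxy', rfl⟩
  rw [bForm_zero_diag (T1 := T1) (T4 := T4), norm_div, RCLike.norm_ofNat]
  linarith [norm_sub_le (bForm A T1 T2 T3 T4 x y) (bForm A T1 T2 T3 T4 x (-y))]

end BNumericalRadius

section GramBNumericalRadius

variable {E : Type*} [NormedAddCommGroup E] [InnerProductSpace ℂ E] [CompleteSpace E]
  {Q T1 T2 T3 T4 : E →L[ℂ] E} {c : ℝ}

theorem norm_bForm_adjoint_comp_self_le (hT1 : ∀ u, ‖Q (T1 u)‖ ≤ c * ‖Q u‖)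
    (hT2 : ∀ u, ‖Q (T2 u)‖ ≤ c * ‖Q u‖) (hT3 : ∀ u, ‖Q (T3 u)‖ ≤ c * ‖Q u‖)
    (hT4 : ∀ u, ‖Q (T4 u)‖ ≤ c * ‖Q u‖) (x y : E) :
    ‖bForm (Q† ∘L Q) T1 T2 T3 T4 x y‖ ≤ c * (‖Q x‖ + ‖Q y‖) ^ 2 := by
  have hrow (X Y : E →L[ℂ] E) (hX : ∀ u, ‖Q (X u)‖ ≤ c * ‖Q u‖)
      (hY : ∀ u, ‖Q (Y u)‖ ≤ c * ‖Q u‖) : ‖Q (X x + Y y)‖ ≤ c * (‖Q x‖ + ‖Q y‖) := by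
    rw [map_add, mul_add]
    exact (norm_add_le _ _).trans (add_le_add (hX x) (hY y))
  simp only [bForm, comp_apply, adjoint_inner_left]
  calc ‖⟪Q (T1 x + T2 y), Q x⟫_ℂ + ⟪Q (T3 x + T4 y), Q y⟫_ℂ‖
      ≤ ‖Q (T1 x + T2 y)‖ * ‖Q x‖ + ‖Q (T3 x + T4 y)‖ * ‖Q y‖ :=
        (norm_add_le _ _).trans (add_le_add (norm_inner_le_norm _ _) (norm_inner_le_norm _ _))
    _ ≤ c * (‖Q x‖ + ‖Q y‖) * ‖Q x‖ + c * (‖Q x‖ + ‖Q y‖) * ‖Q y‖ := by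
        gcongr
        exacts [hrow T1 T2 hT1 hT2, hrow T3 T4 hT3 hT4]
    _ = c * (‖Q x‖ + ‖Q y‖) ^ 2 := by ring

theorem bddAbove_wBSet_adjoint_comp_self (hc : 0 ≤ c) (hT1 : ∀ u, ‖Q (T1 u)‖ ≤ c * ‖Q u‖)
    (hT2 : ∀ u, ‖Q (T2 u)‖ ≤ c * ‖Q u‖) (hT3 : ∀ u, ‖Q (T3 u)‖ ≤ c * ‖Q u‖)
    (hT4 : ∀ u, ‖Q (T4 u)‖ ≤ c * ‖Q u‖) : BddAbove (wBSet (Q† ∘L Q) T1 T2 T3 T4) := by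
  refine ⟨2 * c, ?_⟩
  rintro _ ⟨x, y, hxy, rfl⟩
  have hre (z : E) : (⟪(Q† ∘L Q) z, z⟫_ℂ).re = ‖Q z‖ ^ 2 :=
    (apply_norm_sq_eq_inner_adjoint_left Q z).symm
  rw [hre, hre, Real.sqrt_eq_one] at hxy
  calc ‖bForm (Q† ∘L Q) T1 T2 T3 T4 x y‖ ≤ c * (‖Q x‖ + ‖Q y‖) ^ 2 :=
        norm_bForm_adjoint_comp_self_le hT1 hT2 hT3 hT4 x y
    _ ≤ c * (2 * (‖Q x‖ ^ 2 + ‖Q y‖ ^ 2)) := by gcongr; nlinarith [sq_nonneg (‖Q x‖ - ‖Q y‖)]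
    _ = 2 * c := by rw [hxy]; ring

end GramBNumericalRadius

theorem stmt1 (A T1 T2 T3 T4 : H →L[ℂ] H) (hA : A.IsPositive)
    (h1 : ∃ S : H →L[ℂ] H, A ∘L S = (ContinuousLinearMap.adjoint T1) ∘L A)
    (h2 : ∃ S : H →L[ℂ] H, A ∘L S = (ContinuousLinearMap.adjoint T2) ∘L A)
    (h3 : ∃ S : H →L[ℂ] H, A ∘L S = (ContinuousLinearMap.adjoint T3) ∘L A)
    (h4 : ∃ S : H →L[ℂ] H, A ∘L S = (ContinuousLinearMap.adjoint T4) ∘L A) :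
    wB A 0 T2 T3 0 ≤ wB A T1 T2 T3 T4 := by
  obtain ⟨Q, rfl⟩ : ∃ Q : H →L[ℂ] H, A = Q† ∘L Q :=
    CStarAlgebra.nonneg_iff_eq_star_mul_self.1 ((nonneg_iff_isPositive A).2 hA)
  obtain ⟨S1, hS1⟩ := h1
  obtain ⟨S2, hS2⟩ := h2
  obtain ⟨S3, hS3⟩ := h3
  obtain ⟨S4, hS4⟩ := h4
  obtain ⟨c, hc, hT1, hT2, hT3, hT4⟩ := ((eventually_ge_atTop 0).and <|
    (eventually_norm_apply_le_of_comp_eq_adjoint_comp hS1).and <|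
    (eventually_norm_apply_le_of_comp_eq_adjoint_comp hS2).and <|
    (eventually_norm_apply_le_of_comp_eq_adjoint_comp hS3).and <|
    eventually_norm_apply_le_of_comp_eq_adjoint_comp hS4).exists
  exact wB_zero_diag_le (bddAbove_wBSet_adjoint_comp_self hc hT1 hT2 hT3 hT4)
end

section
/- Let A be strictly positive and let T1, T2, T3, T4 be bounded linear operators on H each admitting an A-adjoint (i.e. for each i there exists S_i with A∘S_i = T_i*∘A). Then w_B([[T1,T2],[T3,T4]]) ≤ max{(1/2)·w_A(T1 + T4 + i(T2 - T3)), (1/2)·w_A(T1 + T4 - i(T2 - T3))} + (1/2)·(w_A(T4 - T1) + w_A(T2 + T3)). -/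
open scoped InnerProductSpace
open ContinuousLinearMap

variable {H : Type*} [NormedAddCommGroup H] [InnerProductSpace ℂ H] [CompleteSpace H]

/-! Write `A = R* R`, so that `⟪A x, y⟫ = ⟪R x, R y⟫`. If `S` is an `A`-adjoint of `T`, then
`N = S * T` is `R`-symmetric, and for such `N` the doubling inequality
`‖R Nʲu‖² ≤ ‖R N²ʲu‖ ‖R u‖`, iterated along `j = 2ᵏ` against the crude bound
`‖R Nʲu‖ ≤ ‖R‖ ‖N‖ʲ ‖u‖`, gives `‖R N u‖ ≤ ‖N‖ ‖R u‖`. Hence `‖R T u‖ ≤ √‖S T‖ ‖R u‖`, the set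
defining `w_A(T)` is bounded (otherwise `sSup` would be the junk value `0`), and
`|⟨ATz, z⟩| ≤ w_A(T) ‖z‖_A²` for every `z`.

For `‖x‖_A² + ‖y‖_A² = 1`, four times `⟨A(T₁x + T₂y), x⟩ + ⟨A(T₃x + T₄y), y⟩` is a signed sum of
the `A`-numerical values of `T₁ + T₄ ± i(T₂ - T₃)` at `x ∓ iy`, of `T₄ - T₁` at `y` and `x` (with
weight `2`), and of `T₂ + T₃` at `x ± y`. By the parallelogram law the pairs `x ∓ iy` and `x ± y`
have total squared `A`-seminorm `2`, which yields the bound. -/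

lemma le_of_forall_pow_two_pow_le_mul {x y C : ℝ} (hy : 0 ≤ y)
    (h : ∀ k : ℕ, x ^ 2 ^ k ≤ C * y ^ 2 ^ k) : x ≤ y := by
  by_contra! hlt
  rcases hy.eq_or_lt with rfl | hy
  · have := h 0
    simp only [pow_zero, pow_one, mul_zero] at this
    linarith
  · obtain ⟨k, hk⟩ := pow_unbounded_of_one_lt C ((one_lt_div hy).2 hlt)
    have hmono : (x / y) ^ k ≤ (x / y) ^ 2 ^ k :=
      pow_le_pow_right₀ ((one_lt_div hy).2 hlt).le Nat.lt_two_pow_self.le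
    have hC : (x / y) ^ 2 ^ k ≤ C := by
      rw [div_pow, div_le_iff₀ (by positivity)]
      exact h k
    linarith

lemma apply_one_le_mul_apply_zero_of_sq_le {b : ℕ → ℝ} {M r : ℝ} (hb : ∀ j, 0 ≤ b j)
    (hsq : ∀ j, b j ^ 2 ≤ b (2 * j) * b 0) (hgrowth : ∀ j, b j ≤ M * r ^ j) (hr : 0 ≤ r) :
    b 1 ≤ r * b 0 := by
  rcases (hb 0).eq_or_lt with h0 | h0
  · have h1 : b 1 ^ 2 ≤ 0 := by simpa [← h0] using hsq 1
    rw [← h0, mul_zero]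
    nlinarith [hb 1]
  have hiter : ∀ k : ℕ, b 1 ^ 2 ^ k * b 0 ≤ b (2 ^ k) * b 0 ^ 2 ^ k := by
    intro k
    induction k with
    | zero => simp
    | succ k ih =>
      refine le_of_mul_le_mul_right ?_ h0
      calc b 1 ^ 2 ^ (k + 1) * b 0 * b 0 = (b 1 ^ 2 ^ k * b 0) ^ 2 := by ring
        _ ≤ (b (2 ^ k) * b 0 ^ 2 ^ k) ^ 2 := pow_le_pow_left₀ (by positivity [hb 1, hb 0]) ih 2
        _ = b (2 ^ k) ^ 2 * b 0 ^ 2 ^ (k + 1) := by ring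
        _ ≤ b (2 * 2 ^ k) * b 0 * b 0 ^ 2 ^ (k + 1) := by gcongr; exact hsq _
        _ = b (2 ^ (k + 1)) * b 0 ^ 2 ^ (k + 1) * b 0 := by rw [pow_succ']; ring
  refine le_of_forall_pow_two_pow_le_mul (by positivity) (C := M / b 0) fun k => ?_
  rw [div_mul_eq_mul_div, le_div_iff₀ h0, mul_pow]
  calc b 1 ^ 2 ^ k * b 0 ≤ b (2 ^ k) * b 0 ^ 2 ^ k := hiter k
    _ ≤ M * r ^ 2 ^ k * b 0 ^ 2 ^ k := by gcongr; exact hgrowth _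
    _ = M * (r ^ 2 ^ k * b 0 ^ 2 ^ k) := by ring

lemma norm_add_add_two_mul_sub_add_sub_le (a b c d e f : ℂ) :
    ‖a + b + 2 * (c - d) + (e - f)‖ ≤ ‖a‖ + ‖b‖ + 2 * (‖c‖ + ‖d‖) + (‖e‖ + ‖f‖) := by
  have hcd : ‖2 * (c - d)‖ ≤ 2 * (‖c‖ + ‖d‖) := by
    rw [norm_mul, Complex.norm_two]; gcongr; exact norm_sub_le c d
  exact (norm_add_le _ _).trans (add_le_add (norm_add₃_le.trans (by gcongr)) (norm_sub_le e f))

section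

variable {E : Type*} [NormedAddCommGroup E] [InnerProductSpace ℂ E]

lemma inner_map_pow_apply_of_inner_symm (R : E →L[ℂ] E) {N : E →L[ℂ] E}
    (hN : ∀ x y, ⟪R (N x), R y⟫_ℂ = ⟪R x, R (N y)⟫_ℂ) (j : ℕ) (x y : E) :
    ⟪R ((N ^ j) x), R y⟫_ℂ = ⟪R x, R ((N ^ j) y)⟫_ℂ := by
  induction j generalizing x with
  | zero => rfl
  | succ j ih =>
    rw [pow_succ, mul_apply_eq_comp (N ^ j) N x, ih, hN, ← mul_apply_eq_comp N (N ^ j) y,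
      ← pow_succ', ← pow_succ]

lemma norm_map_apply_le_of_inner_symm (R : E →L[ℂ] E) {N : E →L[ℂ] E}
    (hN : ∀ x y, ⟪R (N x), R y⟫_ℂ = ⟪R x, R (N y)⟫_ℂ) (u : E) :
    ‖R (N u)‖ ≤ ‖N‖ * ‖R u‖ := by
  have hsq (j : ℕ) : ‖R ((N ^ j) u)‖ ^ 2 ≤ ‖R ((N ^ (2 * j)) u)‖ * ‖R u‖ := by
    rw [← inner_self_eq_norm_sq (𝕜 := ℂ), inner_map_pow_apply_of_inner_symm R hN,
      ← mul_apply_eq_comp (N ^ j) (N ^ j) u, ← pow_add, ← two_mul]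
    exact (re_inner_le_norm _ _).trans_eq (mul_comm _ _)
  have hpow (j : ℕ) : ‖(N ^ j) u‖ ≤ ‖N‖ ^ j * ‖u‖ := by
    induction j with
    | zero => simp
    | succ j ih =>
      rw [pow_succ', mul_apply_eq_comp N (N ^ j) u, pow_succ', mul_assoc]
      exact (N.le_opNorm _).trans (by gcongr)
  have hgrowth (j : ℕ) : ‖R ((N ^ j) u)‖ ≤ ‖R‖ * ‖u‖ * ‖N‖ ^ j :=
    (R.le_opNorm _).trans (by nlinarith [hpow j, norm_nonneg R])
  simpa using apply_one_le_mul_apply_zero_of_sq_le (b := fun j => ‖R ((N ^ j) u)‖)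
    (fun _ => norm_nonneg _) (by simpa using hsq) hgrowth (norm_nonneg N)

lemma norm_map_apply_le_of_inner_adjoint (R : E →L[ℂ] E) {S S' : E →L[ℂ] E}
    (hS : ∀ x y, ⟪R (S x), R y⟫_ℂ = ⟪R x, R (S' y)⟫_ℂ) (u : E) :
    ‖R (S u)‖ ≤ √‖S' * S‖ * ‖R u‖ := by
  have hS' (x y : E) : ⟪R (S' x), R y⟫_ℂ = ⟪R x, R (S y)⟫_ℂ := by
    rw [← inner_conj_symm, ← hS, inner_conj_symm]
  have hN (x y : E) : ⟪R ((S' * S) x), R y⟫_ℂ = ⟪R x, R ((S' * S) y)⟫_ℂ := by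
    rw [mul_apply_eq_comp S' S x, mul_apply_eq_comp S' S y, hS', hS]
  have hsq : ‖R (S u)‖ ^ 2 ≤ ‖S' * S‖ * ‖R u‖ ^ 2 :=
    calc ‖R (S u)‖ ^ 2 = RCLike.re ⟪R ((S' * S) u), R u⟫_ℂ := by
          rw [mul_apply_eq_comp S' S u, hS', inner_self_eq_norm_sq]
      _ ≤ ‖R ((S' * S) u)‖ * ‖R u‖ := re_inner_le_norm (𝕜 := ℂ) _ _
      _ ≤ ‖S' * S‖ * ‖R u‖ * ‖R u‖ := by
          gcongr; exact norm_map_apply_le_of_inner_symm R hN u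
      _ = ‖S' * S‖ * ‖R u‖ ^ 2 := by ring
  rw [← Real.sqrt_sq (norm_nonneg (R u)), ← Real.sqrt_mul (norm_nonneg _)]
  exact Real.le_sqrt_of_sq_le hsq

lemma inner_smul_smul_eq (a : ℂ) (x y : E) : ⟪a • x, a • y⟫_ℂ = (‖a‖ ^ 2 : ℝ) * ⟪x, y⟫_ℂ := by
  rw [inner_smul_left, inner_smul_right, ← mul_assoc, Complex.conj_mul', Complex.ofReal_pow]

lemma re_inner_map_add_add_re_inner_map_sub_sub (A : E →L[ℂ] E) (x y : E) :
    (⟪A (x + y), x + y⟫_ℂ).re + (⟪A (x - y), x - y⟫_ℂ).re =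
      2 * ((⟪A x, x⟫_ℂ).re + (⟪A y, y⟫_ℂ).re) := by
  simp only [map_add, map_sub, inner_add_left, inner_add_right, inner_sub_left, inner_sub_right,
    Complex.add_re, Complex.sub_re]
  ring

lemma four_mul_inner_matrix_apply_eq (A T1 T2 T3 T4 : E →L[ℂ] E) (x y : E) :
    4 * (⟪A (T1 x + T2 y), x⟫_ℂ + ⟪A (T3 x + T4 y), y⟫_ℂ) =
      ⟪A ((T1 + T4 + Complex.I • (T2 - T3)) (x - Complex.I • y)), x - Complex.I • y⟫_ℂ +
        ⟪A ((T1 + T4 - Complex.I • (T2 - T3)) (x + Complex.I • y)), x + Complex.I • y⟫_ℂ +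
        2 * (⟪A ((T4 - T1) y), y⟫_ℂ - ⟪A ((T4 - T1) x), x⟫_ℂ) +
        (⟪A ((T2 + T3) (x + y)), x + y⟫_ℂ - ⟪A ((T2 + T3) (x - y)), x - y⟫_ℂ) := by
  simp only [add_apply, sub_apply, smul_apply, map_add, map_sub, map_smul, inner_add_left,
    inner_add_right, inner_sub_left, inner_sub_right, inner_smul_left, inner_smul_right,
    Complex.conj_I]
  ring_nf
  simp only [Complex.I_sq]
  ring

lemma norm_inner_matrix_apply_le {A T1 T2 T3 T4 : E →L[ℂ] E} (hA : ∀ z, 0 ≤ (⟪A z, z⟫_ℂ).re)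
    {w1 w2 w3 w4 : ℝ}
    (hw1 : ∀ z, ‖⟪A ((T1 + T4 + Complex.I • (T2 - T3)) z), z⟫_ℂ‖ ≤ w1 * (⟪A z, z⟫_ℂ).re)
    (hw2 : ∀ z, ‖⟪A ((T1 + T4 - Complex.I • (T2 - T3)) z), z⟫_ℂ‖ ≤ w2 * (⟪A z, z⟫_ℂ).re)
    (hw3 : ∀ z, ‖⟪A ((T4 - T1) z), z⟫_ℂ‖ ≤ w3 * (⟪A z, z⟫_ℂ).re)
    (hw4 : ∀ z, ‖⟪A ((T2 + T3) z), z⟫_ℂ‖ ≤ w4 * (⟪A z, z⟫_ℂ).re)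
    {x y : E} (hxy : (⟪A x, x⟫_ℂ).re + (⟪A y, y⟫_ℂ).re = 1) :
    ‖⟪A (T1 x + T2 y), x⟫_ℂ + ⟪A (T3 x + T4 y), y⟫_ℂ‖ ≤
      max ((1 / 2) * w1) ((1 / 2) * w2) + (1 / 2) * (w3 + w4) := by
  set q : E → ℝ := fun z => (⟪A z, z⟫_ℂ).re
  set m := max ((1 / 2) * w1) ((1 / 2) * w2)
  have hIy : q (Complex.I • y) = q y := by
    simp [q]
  have hmain : 4 * ‖⟪A (T1 x + T2 y), x⟫_ℂ + ⟪A (T3 x + T4 y), y⟫_ℂ‖ ≤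
      (w1 * q (x - Complex.I • y) + w2 * q (x + Complex.I • y)) + 2 * (w3 * q y + w3 * q x) +
        (w4 * q (x + y) + w4 * q (x - y)) := by
    have h := (congrArg norm (four_mul_inner_matrix_apply_eq A T1 T2 T3 T4 x y)).trans_le
      (norm_add_add_two_mul_sub_add_sub_le _ _ _ _ _ _)
    rw [norm_mul, Complex.norm_ofNat] at h
    linarith [hw1 (x - Complex.I • y), hw2 (x + Complex.I • y), hw3 x, hw3 y, hw4 (x + y),
      hw4 (x - y)]
  have h1 : w1 * q (x - Complex.I • y) ≤ 2 * m * q (x - Complex.I • y) :=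
    mul_le_mul_of_nonneg_right (by linarith [le_max_left ((1 / 2) * w1) ((1 / 2) * w2)]) (hA _)
  have h2 : w2 * q (x + Complex.I • y) ≤ 2 * m * q (x + Complex.I • y) :=
    mul_le_mul_of_nonneg_right (by linarith [le_max_right ((1 / 2) * w1) ((1 / 2) * w2)]) (hA _)
  have hparI : q (x + Complex.I • y) + q (x - Complex.I • y) = 2 * (q x + q y) := by
    rw [← hIy]; exact re_inner_map_add_add_re_inner_map_sub_sub A x (Complex.I • y)
  have hparR : q (x + y) + q (x - y) = 2 * (q x + q y) :=
    re_inner_map_add_add_re_inner_map_sub_sub A x y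
  have hxy' : q x + q y = 1 := hxy
  linear_combination (1 / 4) * hmain + (1 / 4) * h1 + (1 / 4) * h2 + (m / 2) * hparI
    + (m + w3 / 2 + w4 / 2) * hxy' + (w4 / 4) * hparR

lemma wA_nonneg (A T : E →L[ℂ] E) : 0 ≤ wA A T :=
  Real.sSup_nonneg fun _ ⟨_, _, hr⟩ => hr ▸ norm_nonneg _

lemma norm_inner_le_wA_mul {A T : E →L[ℂ] E} (hA : A.IsPositive)
    (hT : ∃ c, ∀ z, ‖⟪A (T z), z⟫_ℂ‖ ≤ c * (⟪A z, z⟫_ℂ).re) (x : E) :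
    ‖⟪A (T x), x⟫_ℂ‖ ≤ wA A T * (⟪A x, x⟫_ℂ).re := by
  obtain ⟨c, hc⟩ := hT
  set q := (⟪A x, x⟫_ℂ).re
  have hq0 : 0 ≤ q := hA.re_inner_nonneg_left x
  rcases hq0.eq_or_lt with hq | hq
  · have h : ‖⟪A (T x), x⟫_ℂ‖ ≤ c * q := hc x
    rwa [← hq, mul_zero] at h ⊢
  have hbdd : BddAbove {r : ℝ | ∃ z : E, aNorm A z = 1 ∧ r = ‖⟪A (T z), z⟫_ℂ‖} := by
    refine ⟨c, ?_⟩
    rintro _ ⟨z, hz, rfl⟩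
    simpa [Real.sqrt_eq_one.mp hz] using hc z
  set a : ℂ := (((√q)⁻¹ : ℝ) : ℂ)
  have ha : ‖a‖ ^ 2 = q⁻¹ := by
    rw [Complex.norm_real, Real.norm_eq_abs, sq_abs, inv_pow, Real.sq_sqrt hq.le]
  have hmem : q⁻¹ * ‖⟪A (T x), x⟫_ℂ‖ ∈
      {r : ℝ | ∃ z : E, aNorm A z = 1 ∧ r = ‖⟪A (T z), z⟫_ℂ‖} := by
    refine ⟨a • x, ?_, ?_⟩
    · rw [aNorm, map_smul, inner_smul_smul_eq, ha, Complex.re_ofReal_mul, inv_mul_cancel₀ hq.ne',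
        Real.sqrt_one]
    · rw [map_smul, map_smul, inner_smul_smul_eq, ha, norm_mul, Complex.norm_real,
        Real.norm_of_nonneg (inv_nonneg.mpr hq.le)]
  rw [mul_comm, ← inv_mul_le_iff₀ hq]
  exact le_csSup hbdd hmem

end

lemma ContinuousLinearMap.IsPositive.exists_inner_eq_inner {A : H →L[ℂ] H} (hA : A.IsPositive) :
    ∃ R : H →L[ℂ] H, ∀ x y, ⟪A x, y⟫_ℂ = ⟪R x, R y⟫_ℂ := by
  obtain ⟨R, rfl⟩ :=
    CStarAlgebra.nonneg_iff_eq_star_mul_self.mp ((nonneg_iff_isPositive A).mpr hA)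
  exact ⟨R, fun x y => by rw [star_eq_adjoint, mul_apply_eq_comp, adjoint_inner_left]⟩

lemma inner_map_apply_eq_of_comp_eq_adjoint_comp {A T S : H →L[ℂ] H} (hA : A.IsPositive)
    (hS : A ∘L S = adjoint T ∘L A) (x y : H) : ⟪A (T x), y⟫_ℂ = ⟪A x, S y⟫_ℂ :=
  calc ⟪A (T x), y⟫_ℂ = ⟪T x, A y⟫_ℂ := hA.isSymmetric _ _
    _ = ⟪x, A (S y)⟫_ℂ := by rw [← adjoint_inner_right, ← comp_apply, ← hS, comp_apply]
    _ = ⟪A x, S y⟫_ℂ := (hA.isSymmetric _ _).symm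

def HasAAdjoint (A T : H →L[ℂ] H) : Prop :=
  ∃ S : H →L[ℂ] H, A ∘L S = adjoint T ∘L A

namespace HasAAdjoint

variable {A T T' : H →L[ℂ] H}

lemma add (hT : HasAAdjoint A T) (hT' : HasAAdjoint A T') : HasAAdjoint A (T + T') := by
  obtain ⟨S, hS⟩ := hT
  obtain ⟨S', hS'⟩ := hT'
  exact ⟨S + S', by rw [comp_add, hS, hS', map_add, add_comp]⟩

lemma sub (hT : HasAAdjoint A T) (hT' : HasAAdjoint A T') : HasAAdjoint A (T - T') := by
  obtain ⟨S, hS⟩ := hT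
  obtain ⟨S', hS'⟩ := hT'
  exact ⟨S - S', by rw [comp_sub, hS, hS', map_sub, sub_comp]⟩

lemma smul (hT : HasAAdjoint A T) (c : ℂ) : HasAAdjoint A (c • T) := by
  obtain ⟨S, hS⟩ := hT
  exact ⟨starRingEnd ℂ c • S, by rw [comp_smul, hS, map_smulₛₗ, smul_comp]⟩

lemma exists_norm_inner_le (hA : A.IsPositive) (hT : HasAAdjoint A T) :
    ∃ c, ∀ x, ‖⟪A (T x), x⟫_ℂ‖ ≤ c * (⟪A x, x⟫_ℂ).re := by
  obtain ⟨R, hR⟩ := hA.exists_inner_eq_inner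
  obtain ⟨S, hS⟩ := hT
  have hRT (x y : H) : ⟪R (T x), R y⟫_ℂ = ⟪R x, R (S y)⟫_ℂ := by
    rw [← hR, ← hR, inner_map_apply_eq_of_comp_eq_adjoint_comp hA hS]
  refine ⟨√‖S * T‖, fun x => ?_⟩
  calc ‖⟪A (T x), x⟫_ℂ‖ = ‖⟪R (T x), R x⟫_ℂ‖ := by rw [hR]
    _ ≤ ‖R (T x)‖ * ‖R x‖ := norm_inner_le_norm _ _
    _ ≤ √‖S * T‖ * ‖R x‖ * ‖R x‖ := by gcongr; exact norm_map_apply_le_of_inner_adjoint R hRT x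
    _ = √‖S * T‖ * (⟪A x, x⟫_ℂ).re := by
      rw [hR, mul_assoc, ← sq, ← inner_self_eq_norm_sq (𝕜 := ℂ)]; rfl

lemma norm_inner_le_wA_mul (hA : A.IsPositive) (hT : HasAAdjoint A T) (x : H) :
    ‖⟪A (T x), x⟫_ℂ‖ ≤ wA A T * (⟪A x, x⟫_ℂ).re :=
  _root_.norm_inner_le_wA_mul hA (hT.exists_norm_inner_le hA) x

end HasAAdjoint

theorem stmt5_general (A T1 T2 T3 T4 : H →L[ℂ] H) (hA : A.IsPositive)
    (h1 : ∃ S : H →L[ℂ] H, A ∘L S = (ContinuousLinearMap.adjoint T1) ∘L A)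
    (h2 : ∃ S : H →L[ℂ] H, A ∘L S = (ContinuousLinearMap.adjoint T2) ∘L A)
    (h3 : ∃ S : H →L[ℂ] H, A ∘L S = (ContinuousLinearMap.adjoint T3) ∘L A)
    (h4 : ∃ S : H →L[ℂ] H, A ∘L S = (ContinuousLinearMap.adjoint T4) ∘L A) :
    wB A T1 T2 T3 T4 ≤
      max ((1 / 2) * wA A (T1 + T4 + Complex.I • (T2 - T3)))
          ((1 / 2) * wA A (T1 + T4 - Complex.I • (T2 - T3))) +
        (1 / 2) * (wA A (T4 - T1) + wA A (T2 + T3)) := by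
  have hw {T : H →L[ℂ] H} (hT : HasAAdjoint A T) := hT.norm_inner_le_wA_mul hA
  refine Real.sSup_le ?_ ?_
  · rintro _ ⟨x, y, hxy, rfl⟩
    exact norm_inner_matrix_apply_le hA.re_inner_nonneg_left
      (hw (.add (.add h1 h4) (.smul (.sub h2 h3) _)))
      (hw (.sub (.add h1 h4) (.smul (.sub h2 h3) _))) (hw (.sub h4 h1)) (hw (.add h2 h3)) (Real.sqrt_eq_one.mp hxy)
  · have := wA_nonneg A (T1 + T4 + Complex.I • (T2 - T3))
    have := wA_nonneg A (T4 - T1)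
    have := wA_nonneg A (T2 + T3)
    exact add_nonneg (le_max_of_le_left (by positivity)) (by positivity)

theorem stmt5 (A T1 T2 T3 T4 : H →L[ℂ] H) (hA : A.IsPositive) (hA' : ∀ x : H, x ≠ 0 → 0 < (⟪A x, x⟫_ℂ).re)
    (h1 : ∃ S : H →L[ℂ] H, A ∘L S = (ContinuousLinearMap.adjoint T1) ∘L A)
    (h2 : ∃ S : H →L[ℂ] H, A ∘L S = (ContinuousLinearMap.adjoint T2) ∘L A)
    (h3 : ∃ S : H →L[ℂ] H, A ∘L S = (ContinuousLinearMap.adjoint T3) ∘L A)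
    (h4 : ∃ S : H →L[ℂ] H, A ∘L S = (ContinuousLinearMap.adjoint T4) ∘L A) :
    wB A T1 T2 T3 T4 ≤
      max ((1 / 2) * wA A (T1 + T4 + Complex.I • (T2 - T3)))
          ((1 / 2) * wA A (T1 + T4 - Complex.I • (T2 - T3))) +
        (1 / 2) * (wA A (T4 - T1) + wA A (T2 + T3)) :=
  stmt5_general A T1 T2 T3 T4 hA h1 h2 h3 h4
end

section
/- Let T1, T2 be bounded linear operators on H with A-adjoints S1 = T1^{#_A}, S2 = T2^{#_A} (i.e. A∘S_i = T_i*∘A and range(S_i) ⊆ closure(range A)). Then max(‖T1+T2‖_A², ‖T1-T2‖_A²) ≤ min(‖S1∘T1 + S2∘T2‖_A + ‖S1∘T2 + S2∘T1‖_A, ‖T1∘S1 + T2∘S2‖_A + ‖T1∘S2 + T2∘S1‖_A). -/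
/-!
Write `⟨x, y⟩_A = ⟪A x, y⟫`. An `A`-adjoint `S` of `T` moves `T` across this semi-inner product,
so for `‖x‖_A = 1`, with `W₁ = S₁T₁ + S₂T₂` and `W₂ = S₁T₂ + S₂T₁`,
`‖(T₁ + T₂) x‖_A² = ⟨x, (S₁ + S₂)(T₁ + T₂) x⟩_A = ⟨x, W₁ x⟩_A + ⟨x, W₂ x⟩_A ≤ ‖W₁‖_A + ‖W₂‖_A`
by Cauchy–Schwarz. Replacing `(T₂, S₂)` by `(-T₂, -S₂)` handles `T₁ - T₂`, and exchanging the roles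
of the `Tᵢ` and the `Sᵢ`, together with `‖T‖_A ≤ ‖S‖_A`, gives the bound by the `TᵢSⱼ` terms.

The suprema defining `‖T‖_A` are finite when `T` has an `A`-adjoint `S`, because
`‖T x‖_A² ≤ ‖x‖_A ‖S T x‖_A` and an `A`-selfadjoint `W` such as `S T` satisfies
`‖W x‖_A ≤ ‖W‖ ‖x‖_A`: iterating `‖W x‖_A² ≤ ‖x‖_A ‖W² x‖_A` gives
`‖W x‖_A ^ 2ⁿ ≤ ‖x‖_A ^ (2ⁿ - 1) ‖W ^ 2ⁿ x‖_A ≤ C ‖x‖_A ^ (2ⁿ - 1) ‖W‖ ^ 2ⁿ`.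
-/

open scoped InnerProductSpace
open ContinuousLinearMap

variable {H : Type*} [NormedAddCommGroup H] [InnerProductSpace ℂ H] [CompleteSpace H]

theorem le_of_forall_pow_two_pow_le_mul_s8 {a b D : ℝ} (hb : 0 ≤ b)
    (h : ∀ n : ℕ, a ^ 2 ^ n ≤ D * b ^ 2 ^ n) : a ≤ b := by
  by_contra! hba
  have ha0 : 0 < a := hb.trans_lt hba
  have hlim : Filter.Tendsto (fun n : ℕ ↦ D * (b / a) ^ 2 ^ n) Filter.atTop (nhds 0) := by
    simpa using ((tendsto_pow_atTop_nhds_zero_of_lt_one (div_nonneg hb ha0.le)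
      ((div_lt_one ha0).2 hba)).comp (tendsto_pow_atTop_atTop_of_one_lt one_lt_two)).const_mul D
  have hge : ∀ n : ℕ, 1 ≤ D * (b / a) ^ 2 ^ n := fun n ↦ by
    rw [div_pow, ← mul_div_assoc, one_le_div (by positivity)]
    exact h n
  exact absurd (ge_of_tendsto' hlim hge) (by norm_num)

theorem apply_one_le_mul_apply_zero_of_sq_le_s8 {f : ℕ → ℝ} {C r : ℝ} (hf : ∀ k, 0 ≤ f k)
    (hr : 0 ≤ r) (hsq : ∀ k, f k ^ 2 ≤ f 0 * f (2 * k)) (hle : ∀ k, f k ≤ C * r ^ k) :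
    f 1 ≤ r * f 0 := by
  rcases (hf 0).eq_or_lt with h0 | h0
  · have := hsq 1
    rw [← h0, zero_mul] at this
    rw [← h0, mul_zero]
    exact (pow_eq_zero_iff two_ne_zero).1 (le_antisymm this (sq_nonneg _)) |>.le
  have hpow : ∀ n : ℕ, f 1 ^ 2 ^ n * f 0 ≤ f 0 ^ 2 ^ n * f (2 ^ n) := by
    intro n
    induction n with
    | zero => simp [mul_comm]
    | succ n ih =>
      refine le_of_mul_le_mul_right ?_ h0
      calc f 1 ^ 2 ^ (n + 1) * f 0 * f 0 = (f 1 ^ 2 ^ n * f 0) ^ 2 := by ring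
        _ ≤ (f 0 ^ 2 ^ n * f (2 ^ n)) ^ 2 :=
          pow_le_pow_left₀ (mul_nonneg (pow_nonneg (hf 1) _) h0.le) ih 2
        _ = f 0 ^ 2 ^ (n + 1) * f (2 ^ n) ^ 2 := by ring
        _ ≤ f 0 ^ 2 ^ (n + 1) * (f 0 * f (2 * 2 ^ n)) := by gcongr; exact hsq _
        _ = f 0 ^ 2 ^ (n + 1) * f (2 ^ (n + 1)) * f 0 := by rw [pow_succ' 2 n]; ring
  refine le_of_forall_pow_two_pow_le_mul_s8 (mul_nonneg hr h0.le) (D := C / f 0) fun n ↦ ?_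
  refine le_of_mul_le_mul_right ?_ h0
  calc f 1 ^ 2 ^ n * f 0 ≤ f 0 ^ 2 ^ n * f (2 ^ n) := hpow n
    _ ≤ f 0 ^ 2 ^ n * (C * r ^ 2 ^ n) := by gcongr; exact hle _
    _ = C / f 0 * (r * f 0) ^ 2 ^ n * f 0 := by field_simp; ring

section Seminorm

omit [CompleteSpace H]

variable {A : H →L[ℂ] H}

theorem aNorm_nonneg (x : H) : 0 ≤ aNorm A x :=
  Real.sqrt_nonneg _

theorem aNorm_neg (x : H) : aNorm A (-x) = aNorm A x := by
  simp [aNorm]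

theorem aOpNorm_neg (T : H →L[ℂ] H) : aOpNorm A (-T) = aOpNorm A T := by
  simp only [aOpNorm, neg_apply, aNorm_neg]

theorem aOpNorm_nonneg (T : H →L[ℂ] H) : 0 ≤ aOpNorm A T :=
  Real.sSup_nonneg fun _ ⟨_, _, _, hr⟩ ↦ hr ▸ aNorm_nonneg _

theorem aOpNorm_le_of_forall {T : H →L[ℂ] H} {C : ℝ} (hC : 0 ≤ C)
    (h : ∀ x ∈ closure (Set.range A), aNorm A x = 1 → aNorm A (T x) ≤ C) : aOpNorm A T ≤ C :=
  Real.sSup_le (fun _ ⟨x, hx, h1, hr⟩ ↦ hr ▸ h x hx h1) hC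

-- Without `hT` the set could be unbounded above, and then its `sSup` is `0`.
theorem aNorm_apply_le_aOpNorm_of_le {T : H →L[ℂ] H} {C : ℝ}
    (hT : ∀ y, aNorm A (T y) ≤ C * aNorm A y) {x : H} (hx : x ∈ closure (Set.range A))
    (h1 : aNorm A x = 1) : aNorm A (T x) ≤ aOpNorm A T :=
  le_csSup ⟨C, fun _ ⟨y, _, hy, hr⟩ ↦ hr ▸ by simpa [hy] using hT y⟩ ⟨x, hx, h1, rfl⟩

variable (hA : A.IsPositive)
include hA

theorem aNorm_sq (x : H) : aNorm A x ^ 2 = (⟪A x, x⟫_ℂ).re :=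
  Real.sq_sqrt (hA.re_inner_nonneg_left x)

theorem aNorm_add_of_apply_eq_zero {q : H} (hq : A q = 0) (x : H) :
    aNorm A (x + q) = aNorm A x := by
  simp [aNorm, hA.inner_left_eq_inner_right x q, hq]

end Seminorm

section Sqrt

variable {A : H →L[ℂ] H} (hA : A.IsPositive)
include hA

theorem inner_apply_eq_inner_sqrt (x y : H) :
    ⟪A x, y⟫_ℂ = ⟪CFC.sqrt A x, CFC.sqrt A y⟫_ℂ := by
  have hR : IsSelfAdjoint (CFC.sqrt A) := (CFC.sqrt_nonneg A).isSelfAdjoint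
  conv_lhs =>
    rw [← CFC.sqrt_mul_sqrt_self A ((nonneg_iff_isPositive A).2 hA), mul_apply_eq_comp]
  rw [← adjoint_inner_right, hR.adjoint_eq]

theorem aNorm_eq_norm_sqrt_apply (x : H) : aNorm A x = ‖CFC.sqrt A x‖ := by
  rw [aNorm, inner_apply_eq_inner_sqrt hA, inner_self_eq_norm_sq_to_K]
  norm_cast
  exact Real.sqrt_sq (norm_nonneg _)

theorem norm_inner_le_aNorm_mul_aNorm (x y : H) : ‖⟪A x, y⟫_ℂ‖ ≤ aNorm A x * aNorm A y := by
  rw [inner_apply_eq_inner_sqrt hA, aNorm_eq_norm_sqrt_apply hA, aNorm_eq_norm_sqrt_apply hA]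
  exact norm_inner_le_norm _ _

theorem aNorm_smul (c : ℂ) (x : H) : aNorm A (c • x) = ‖c‖ * aNorm A x := by
  simp only [aNorm_eq_norm_sqrt_apply hA, map_smul, norm_smul]

theorem aNorm_le_norm_sqrt_mul_norm (x : H) : aNorm A x ≤ ‖CFC.sqrt A‖ * ‖x‖ :=
  aNorm_eq_norm_sqrt_apply hA x ▸ le_opNorm _ _

end Sqrt

theorem ContinuousLinearMap.norm_pow_apply_le {𝕜 E : Type*} [NontriviallyNormedField 𝕜]
    [SeminormedAddCommGroup E] [NormedSpace 𝕜 E] (W : E →L[𝕜] E) (x : E) (k : ℕ) :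
    ‖(W ^ k) x‖ ≤ ‖W‖ ^ k * ‖x‖ := by
  induction k with
  | zero => simp
  | succ k ih =>
    rw [pow_succ', mul_apply_eq_comp, pow_succ', mul_assoc]
    exact (le_opNorm _ _).trans (by gcongr)

omit [CompleteSpace H] in
theorem coe_topologicalClosure_range (A : H →L[ℂ] H) :
    ((LinearMap.range (A : H →ₗ[ℂ] H)).topologicalClosure : Set H) = closure (Set.range A) := by
  rw [Submodule.topologicalClosure_coe, LinearMap.coe_range, ContinuousLinearMap.coe_coe]

theorem exists_mem_closure_range_add_apply_eq_zero {A : H →L[ℂ] H} (hA : IsSelfAdjoint A) (u : H) :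
    ∃ v ∈ closure (Set.range A), ∃ q, A q = 0 ∧ u = v + q := by
  set K := (LinearMap.range (A : H →ₗ[ℂ] H)).topologicalClosure
  obtain ⟨v, hv, q, hq, rfl⟩ := K.exists_add_mem_mem_orthogonal u
  rw [Submodule.orthogonal_closure, orthogonal_range, hA.adjoint_eq] at hq
  exact ⟨v, coe_topologicalClosure_range A ▸ hv, q, hq, rfl⟩

-- No range condition: `S` need not be the reduced solution `T^{#_A}`.
def IsAAdjoint (A T S : H →L[ℂ] H) : Prop :=
  A ∘L S = adjoint T ∘L A

namespace IsAAdjoint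

variable {A T S T' S' : H →L[ℂ] H}

theorem inner_map_left (h : IsAAdjoint A T S) (x y : H) : ⟪A (S x), y⟫_ℂ = ⟪A x, T y⟫_ℂ := by
  rw [← comp_apply, h, comp_apply, adjoint_inner_left]

theorem symm (hA : IsSelfAdjoint A) (h : IsAAdjoint A T S) : IsAAdjoint A S T := by
  have := congrArg adjoint h
  rwa [adjoint_comp, adjoint_comp, adjoint_adjoint, hA.adjoint_eq, eq_comm] at this

theorem comp (h : IsAAdjoint A T S) (h' : IsAAdjoint A T' S') :
    IsAAdjoint A (T' ∘L T) (S ∘L S') := by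
  rw [IsAAdjoint, adjoint_comp, ← comp_assoc, h, comp_assoc, h', comp_assoc]

theorem add (h : IsAAdjoint A T S) (h' : IsAAdjoint A T' S') :
    IsAAdjoint A (T + T') (S + S') := by
  rw [IsAAdjoint, comp_add, h, h', map_add, add_comp]

theorem neg (h : IsAAdjoint A T S) : IsAAdjoint A (-T) (-S) := by
  rw [IsAAdjoint, comp_neg, h, map_neg, neg_comp]

theorem pow (h : IsAAdjoint A T T) (n : ℕ) : IsAAdjoint A (T ^ n) (T ^ n) := by
  induction n with
  | zero => rw [IsAAdjoint, pow_zero, adjoint_one, ← mul_def, ← mul_def, mul_one, one_mul]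
  | succ n ih =>
    have := h.comp ih
    rwa [← mul_def, ← mul_def, ← pow_succ, ← pow_succ'] at this

end IsAAdjoint

namespace IsAAdjoint

variable {A T S : H →L[ℂ] H} (hA : A.IsPositive)
include hA

theorem aNorm_apply_sq (h : IsAAdjoint A T S) (x : H) :
    aNorm A (T x) ^ 2 = (⟪A x, S (T x)⟫_ℂ).re := by
  rw [aNorm_sq hA, (h.symm hA.isSelfAdjoint).inner_map_left]

theorem aNorm_apply_sq_le (h : IsAAdjoint A T S) (x : H) :
    aNorm A (T x) ^ 2 ≤ aNorm A x * aNorm A (S (T x)) :=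
  h.aNorm_apply_sq hA x ▸ (Complex.re_le_norm _).trans (norm_inner_le_aNorm_mul_aNorm hA _ _)

theorem aNorm_apply_le_norm_mul (h : IsAAdjoint A T T) (x : H) :
    aNorm A (T x) ≤ ‖T‖ * aNorm A x := by
  have hsq (k : ℕ) :
      aNorm A ((T ^ k) x) ^ 2 ≤ aNorm A ((T ^ 0) x) * aNorm A ((T ^ (2 * k)) x) := by
    rw [pow_zero, one_apply_eq_self, two_mul, pow_add, mul_apply_eq_comp]
    exact (h.pow k).aNorm_apply_sq_le hA x
  have hle (k : ℕ) : aNorm A ((T ^ k) x) ≤ ‖CFC.sqrt A‖ * ‖x‖ * ‖T‖ ^ k :=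
    calc aNorm A ((T ^ k) x) ≤ ‖CFC.sqrt A‖ * ‖(T ^ k) x‖ := aNorm_le_norm_sqrt_mul_norm hA _
      _ ≤ ‖CFC.sqrt A‖ * (‖T‖ ^ k * ‖x‖) := by gcongr; exact T.norm_pow_apply_le x k
      _ = ‖CFC.sqrt A‖ * ‖x‖ * ‖T‖ ^ k := by ring
  simpa only [pow_one, pow_zero, one_apply_eq_self] using
    apply_one_le_mul_apply_zero_of_sq_le_s8 (fun _ ↦ aNorm_nonneg _) (norm_nonneg T) hsq hle

theorem aNorm_apply_le (h : IsAAdjoint A T S) (x : H) :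
    aNorm A (T x) ≤ √‖S ∘L T‖ * aNorm A x := by
  have hST : IsAAdjoint A (S ∘L T) (S ∘L T) := h.comp (h.symm hA.isSelfAdjoint)
  refine (pow_le_pow_iff_left₀ (aNorm_nonneg _)
    (mul_nonneg (Real.sqrt_nonneg _) (aNorm_nonneg _)) two_ne_zero).1 ?_
  calc aNorm A (T x) ^ 2 ≤ aNorm A x * aNorm A ((S ∘L T) x) := h.aNorm_apply_sq_le hA x
    _ ≤ aNorm A x * (‖S ∘L T‖ * aNorm A x) :=
      mul_le_mul_of_nonneg_left (hST.aNorm_apply_le_norm_mul hA x) (aNorm_nonneg x)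
    _ = (√‖S ∘L T‖ * aNorm A x) ^ 2 := by rw [mul_pow, Real.sq_sqrt (norm_nonneg _)]; ring

theorem aNorm_apply_le_aOpNorm (h : IsAAdjoint A T S) {x : H}
    (hx : x ∈ closure (Set.range A)) (h1 : aNorm A x = 1) : aNorm A (T x) ≤ aOpNorm A T :=
  aNorm_apply_le_aOpNorm_of_le (h.aNorm_apply_le hA) hx h1

theorem aNorm_apply_le_aOpNorm_mul_of_mem (h : IsAAdjoint A T S) {v : H}
    (hv : v ∈ closure (Set.range A)) : aNorm A (T v) ≤ aOpNorm A T * aNorm A v := by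
  rcases (aNorm_nonneg v).eq_or_lt with h0 | h0
  · have := h.aNorm_apply_le hA v
    rw [← h0, mul_zero] at this ⊢
    exact this
  set x := ((aNorm A v)⁻¹ : ℂ) • v
  have hx : x ∈ closure (Set.range A) := by
    rw [← coe_topologicalClosure_range] at hv ⊢
    exact Submodule.smul_mem _ _ hv
  have hx1 : aNorm A x = 1 := by
    rw [aNorm_smul hA, norm_inv, Complex.norm_real, Real.norm_of_nonneg h0.le,
      inv_mul_cancel₀ h0.ne']
  have hvx : v = (aNorm A v : ℂ) • x := by
    simp [x, smul_smul, h0.ne']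
  calc aNorm A (T v) = aNorm A v * aNorm A (T x) := by
        conv_lhs => rw [hvx, map_smul, aNorm_smul hA, Complex.norm_real, Real.norm_of_nonneg h0.le]
    _ ≤ aNorm A v * aOpNorm A T := by gcongr; exact h.aNorm_apply_le_aOpNorm hA hx hx1
    _ = aOpNorm A T * aNorm A v := mul_comm _ _

theorem aNorm_apply_le_aOpNorm_mul (h : IsAAdjoint A T S) (u : H) :
    aNorm A (T u) ≤ aOpNorm A T * aNorm A u := by
  obtain ⟨v, hv, q, hq, rfl⟩ := exists_mem_closure_range_add_apply_eq_zero hA.isSelfAdjoint u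
  have hTq : A (T q) = 0 := by
    rw [← comp_apply, h.symm hA.isSelfAdjoint, comp_apply, hq, map_zero]
  rw [map_add, aNorm_add_of_apply_eq_zero hA hTq, aNorm_add_of_apply_eq_zero hA hq]
  exact h.aNorm_apply_le_aOpNorm_mul_of_mem hA hv

theorem aOpNorm_le (h : IsAAdjoint A T S) : aOpNorm A T ≤ aOpNorm A S := by
  refine aOpNorm_le_of_forall (aOpNorm_nonneg S) fun x _ hx1 ↦ ?_
  have hS := (h.symm hA.isSelfAdjoint).aNorm_apply_le_aOpNorm_mul hA (T x)
  have hsq : aNorm A (T x) ^ 2 ≤ aOpNorm A S * aNorm A (T x) := by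
    simpa [hx1] using
      (h.aNorm_apply_sq_le hA x).trans (mul_le_mul_of_nonneg_left hS (aNorm_nonneg x))
  nlinarith [aNorm_nonneg (A := A) (T x), aOpNorm_nonneg (A := A) S]

end IsAAdjoint

section Main

variable {A T1 T2 S1 S2 : H →L[ℂ] H} (hA : A.IsPositive)
include hA

theorem aOpNorm_add_sq_le (h1 : IsAAdjoint A T1 S1) (h2 : IsAAdjoint A T2 S2) :
    aOpNorm A (T1 + T2) ^ 2 ≤
      aOpNorm A (S1 ∘L T1 + S2 ∘L T2) + aOpNorm A (S1 ∘L T2 + S2 ∘L T1) := by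
  set W1 := S1 ∘L T1 + S2 ∘L T2
  set W2 := S1 ∘L T2 + S2 ∘L T1
  have h1' := h1.symm hA.isSelfAdjoint
  have h2' := h2.symm hA.isSelfAdjoint
  have hW1 : IsAAdjoint A W1 W1 := (h1.comp h1').add (h2.comp h2')
  have hW2 : IsAAdjoint A W2 (S2 ∘L T1 + S1 ∘L T2) := (h2.comp h1').add (h1.comp h2')
  have hB : 0 ≤ aOpNorm A W1 + aOpNorm A W2 := add_nonneg (aOpNorm_nonneg _) (aOpNorm_nonneg _)
  have key (x : H) (hx : x ∈ closure (Set.range A)) (hx1 : aNorm A x = 1) :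
      aNorm A ((T1 + T2) x) ^ 2 ≤ aOpNorm A W1 + aOpNorm A W2 := by
    have hsplit : (S1 + S2) ((T1 + T2) x) = W1 x + W2 x := by
      simp only [W1, W2, add_apply, comp_apply, map_add]
      abel
    calc aNorm A ((T1 + T2) x) ^ 2 = (⟪A x, W1 x⟫_ℂ + ⟪A x, W2 x⟫_ℂ).re := by
          rw [(h1.add h2).aNorm_apply_sq hA, hsplit, inner_add_right]
      _ ≤ ‖⟪A x, W1 x⟫_ℂ‖ + ‖⟪A x, W2 x⟫_ℂ‖ := (Complex.re_le_norm _).trans (norm_add_le _ _)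
      _ ≤ aNorm A (W1 x) + aNorm A (W2 x) := by
          gcongr <;> simpa [hx1] using norm_inner_le_aNorm_mul_aNorm hA x _
      _ ≤ aOpNorm A W1 + aOpNorm A W2 :=
          add_le_add (hW1.aNorm_apply_le_aOpNorm hA hx hx1) (hW2.aNorm_apply_le_aOpNorm hA hx hx1)
  have hle : aOpNorm A (T1 + T2) ≤ √(aOpNorm A W1 + aOpNorm A W2) :=
    aOpNorm_le_of_forall (Real.sqrt_nonneg _) fun x hx hx1 ↦ Real.le_sqrt_of_sq_le (key x hx hx1)
  calc aOpNorm A (T1 + T2) ^ 2 ≤ √(aOpNorm A W1 + aOpNorm A W2) ^ 2 :=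
        pow_le_pow_left₀ (aOpNorm_nonneg _) hle 2
    _ = aOpNorm A W1 + aOpNorm A W2 := Real.sq_sqrt hB

theorem aOpNorm_add_sq_le_min (h1 : IsAAdjoint A T1 S1) (h2 : IsAAdjoint A T2 S2) :
    aOpNorm A (T1 + T2) ^ 2 ≤
      min (aOpNorm A (S1 ∘L T1 + S2 ∘L T2) + aOpNorm A (S1 ∘L T2 + S2 ∘L T1))
        (aOpNorm A (T1 ∘L S1 + T2 ∘L S2) + aOpNorm A (T1 ∘L S2 + T2 ∘L S1)) :=
  le_min (aOpNorm_add_sq_le hA h1 h2) <|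
    (pow_le_pow_left₀ (aOpNorm_nonneg _) ((h1.add h2).aOpNorm_le hA) 2).trans
      (aOpNorm_add_sq_le hA (h1.symm hA.isSelfAdjoint) (h2.symm hA.isSelfAdjoint))

end Main

theorem stmt8_general (A T1 T2 S1 S2 : H →L[ℂ] H) (hA : A.IsPositive)
    (hS1 : A ∘L S1 = (ContinuousLinearMap.adjoint T1) ∘L A)
    (hS2 : A ∘L S2 = (ContinuousLinearMap.adjoint T2) ∘L A) :
    max ((aOpNorm A (T1 + T2)) ^ 2) ((aOpNorm A (T1 - T2)) ^ 2) ≤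
      min (aOpNorm A (S1 ∘L T1 + S2 ∘L T2) + aOpNorm A (S1 ∘L T2 + S2 ∘L T1))
          (aOpNorm A (T1 ∘L S1 + T2 ∘L S2) + aOpNorm A (T1 ∘L S2 + T2 ∘L S1)) := by
  refine max_le (aOpNorm_add_sq_le_min hA hS1 hS2) ?_
  simpa only [sub_eq_add_neg, neg_comp, comp_neg, neg_neg, ← neg_add, aOpNorm_neg] using
    aOpNorm_add_sq_le_min hA hS1 (IsAAdjoint.neg hS2)

theorem stmt8 (A T1 T2 S1 S2 : H →L[ℂ] H) (hA : A.IsPositive)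
    (hS1 : A ∘L S1 = (ContinuousLinearMap.adjoint T1) ∘L A)
    (hS1r : Set.range (⇑S1) ⊆ closure (Set.range (⇑A)))
    (hS2 : A ∘L S2 = (ContinuousLinearMap.adjoint T2) ∘L A)
    (hS2r : Set.range (⇑S2) ⊆ closure (Set.range (⇑A))) :
    max ((aOpNorm A (T1 + T2)) ^ 2) ((aOpNorm A (T1 - T2)) ^ 2) ≤
      min (aOpNorm A (S1 ∘L T1 + S2 ∘L T2) + aOpNorm A (S1 ∘L T2 + S2 ∘L T1))
          (aOpNorm A (T1 ∘L S1 + T2 ∘L S2) + aOpNorm A (T1 ∘L S2 + T2 ∘L S1)) :=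
  stmt8_general A T1 T2 S1 S2 hA hS1 hS2
end
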